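/- arXiv:1803.06105 — 11 statements merged into one kernel-verified Lean document; each statement's English description precedes it below -/
import Mathlib

section
/- Let A be a finite alphabet with q = |A| ≥ 2, let 1 ≤ r ≤ n be integers, and let C be a code of length n over A with exactly q^r codewords and minimum distance at least n − r + 1 (i.e., C is a maximum distance separable code). Then for every coordinate i₀ ∈ Fin n and every symbol α ∈ A, the number of codewords c ∈ C with c i₀ = α is exactly q^(r−1). -/
/-- Counting functions fixing one coordinate. -/
lemma count_fix_one {I A : Type*} [Fintype I] [DecidableEq I] [Fintype A] [DecidableEq A]
    (x : I) (α : A) :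
    (Finset.univ.filter (fun f : I → A => f x = α)).card
      = Fintype.card A ^ (Fintype.card I - 1) := by
  have h1 : (Finset.univ.filter (fun f : I → A => f x = α)).card
      = Fintype.card {f : I → A // f x = α} := (Fintype.card_subtype _).symm
  rw [h1]
  have e : {f : I → A // f x = α} ≃ ({j : I // j ≠ x} → A) :=
    { toFun := fun f j => f.1 j
      invFun := fun g => ⟨fun j => if h : j = x then α else g ⟨j, h⟩, by simp⟩
      left_inv := by
        rintro ⟨f, hf⟩
        ext j
        by_cases h : j = x
        · subst h; simp [hf]
        · simp [h]
      right_inv := by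
        intro g
        funext j
        simp [j.2] }
  rw [Fintype.card_congr e, Fintype.card_fun]
  congr 1
  have : Fintype.card {j : I // j = x} = 1 := Fintype.card_subtype_eq x
  have h2 := Fintype.card_subtype_compl (fun j : I => j = x)
  simpa [this] using h2

/-- In an MDS code `C` of length `n` over an alphabet of size `q` with
`q ^ r` codewords and minimum distance at least `n - r + 1`, for every coordinate `i₀`
and every symbol `α`, exactly `q ^ (r - 1)` codewords have `α` at position `i₀`. -/
theorem mds_count_fixed_coordinate {A : Type*} [Fintype A] [DecidableEq A]
    (hq : 2 ≤ Fintype.card A) {n r : ℕ} (hr : 1 ≤ r) (hrn : r ≤ n)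
    (C : Finset (Fin n → A)) (hcard : C.card = Fintype.card A ^ r)
    (hdist : ∀ c ∈ C, ∀ c' ∈ C, c ≠ c' → n - r + 1 ≤ hammingDist c c')
    (i₀ : Fin n) (α : A) :
    (C.filter (fun c => c i₀ = α)).card = Fintype.card A ^ (r - 1) := by
  classical
  -- choose a set S of r coordinates containing i₀
  obtain ⟨S, hSsub, hScard⟩ := Finset.exists_superset_card_eq
    (s := ({i₀} : Finset (Fin n))) (by simpa using hr) (by simpa using hrn)
  have hi₀ : i₀ ∈ S := hSsub (Finset.mem_singleton_self i₀)
  set π : (Fin n → A) → (↥S → A) := fun c j => c j with hπ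
  -- restriction to S is injective on C
  have hinj : ∀ c ∈ C, ∀ c' ∈ C, π c = π c' → c = c' := by
    intro c hc c' hc' hpi
    by_contra hne
    have h1 := hdist c hc c' hc' hne
    have h2 : hammingDist c c' ≤ n - r := by
      have hsub : ({i | c i ≠ c' i} : Finset (Fin n)) ⊆ Sᶜ := by
        intro j hj
        simp only [Finset.mem_filter, Finset.mem_univ, true_and] at hj
        rw [Finset.mem_compl]
        intro hjS
        exact hj (congrFun hpi ⟨j, hjS⟩)
      calc hammingDist c c' ≤ Sᶜ.card := Finset.card_le_card hsub
        _ = n - r := by rw [Finset.card_compl, hScard]; simp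
    omega
  -- the image of C under π is everything
  have himg : C.image π = Finset.univ := by
    apply Finset.eq_univ_of_card
    rw [Finset.card_image_of_injOn (fun c hc c' hc' => hinj c hc c' hc'), hcard,
      Fintype.card_fun, Fintype.card_coe, hScard]
  -- bijection between filtered code and filtered functions
  have hbij : (C.filter (fun c => c i₀ = α)).card
      = (Finset.univ.filter (fun f : ↥S → A => f ⟨i₀, hi₀⟩ = α)).card := by
    apply Finset.card_bij (fun c _ => π c)
    · intro c hc
      simp only [Finset.mem_filter] at hc ⊢
      exact ⟨Finset.mem_univ _, hc.2⟩
    · intro c hc c' hc' h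
      exact hinj c (Finset.mem_filter.mp hc).1 c' (Finset.mem_filter.mp hc').1 h
    · intro f hf
      simp only [Finset.mem_filter] at hf
      have : f ∈ C.image π := by rw [himg]; exact Finset.mem_univ _
      obtain ⟨c, hc, hcf⟩ := Finset.mem_image.mp this
      refine ⟨c, Finset.mem_filter.mpr ⟨hc, ?_⟩, hcf⟩
      have := hf.2
      rw [← hcf] at this
      exact this
  rw [hbij, count_fix_one, Fintype.card_coe, hScard]
end

section
/- Let C be a code of length n over a finite alphabet A with minimum distance at least Δ, where Δ ≤ n, and let d ≥ 1 be an integer with d·(n − Δ) < n. Then for every codeword c₀ ∈ C and every finite set S of codewords of C with c₀ ∉ S and |S| ≤ d, there exists a coordinate i ∈ Fin n such that c₀ i ≠ c i for every c ∈ S. Equivalently, the concatenation of C with the identity matrix, i.e., the Boolean matrix with rows indexed by pairs (i, α) ∈ Fin n × A and columns indexed by the codewords of C whose entry at row (i, α) and column c is true iff c i = α, is d-disjunct. -/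
/-- A Boolean matrix `T` (rows indexed by `ρ`, columns by `κ`) is `d`-disjunct if for
every column `j₀` and every finite set `S` of `d` columns not containing `j₀`, some row
has a `true` in column `j₀` and `false` in all columns of `S`. -/
def Disjunct {ρ κ : Type*} (T : ρ → κ → Bool) (d : ℕ) : Prop :=
  ∀ j₀ : κ, ∀ S : Finset κ, S.card = d → j₀ ∉ S →
    ∃ i : ρ, T i j₀ = true ∧ ∀ j ∈ S, T i j = false

/-- For a code `C` of length `n` with minimum distance at least `Δ ≤ n` and
`d ≥ 1` with `d * (n - Δ) < n`: for every `c₀ ∈ C` and every `S ⊆ C` with `c₀ ∉ S` and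
`|S| ≤ d`, some coordinate separates `c₀` from all of `S`; equivalently the concatenation
of `C` with the identity matrix (rows indexed by `Fin n × A`, columns by the codewords of
`C`, entry at row `(i, α)` and column `c` true iff `c i = α`) is `d`-disjunct. -/
theorem code_concatenation_disjunct {A : Type*} [DecidableEq A] {n Δ d : ℕ}
    (hΔn : Δ ≤ n) (hd : 1 ≤ d) (hdn : d * (n - Δ) < n)
    (C : Finset (Fin n → A))
    (hdist : ∀ c ∈ C, ∀ c' ∈ C, c ≠ c' → Δ ≤ hammingDist c c') :
    (∀ c₀ ∈ C, ∀ S : Finset (Fin n → A), S ⊆ C → c₀ ∉ S → S.card ≤ d →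
        ∃ i : Fin n, ∀ c ∈ S, c₀ i ≠ c i) ∧
    Disjunct (fun (p : Fin n × A) (c : {x // x ∈ C}) => decide (c.val p.1 = p.2)) d := by
  have main : ∀ c₀ ∈ C, ∀ S : Finset (Fin n → A), S ⊆ C → c₀ ∉ S → S.card ≤ d →
      ∃ i : Fin n, ∀ c ∈ S, c₀ i ≠ c i := by
    intro c₀ hc₀ S hSC hc₀S hScard
    set B : Finset (Fin n) :=
      S.biUnion (fun c => Finset.univ.filter (fun i => c₀ i = c i)) with hB
    have hBcard : B.card < n := by
      calc B.card ≤ ∑ c ∈ S, (Finset.univ.filter (fun i => c₀ i = c i)).card :=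
            Finset.card_biUnion_le
        _ ≤ ∑ _c ∈ S, (n - Δ) := by
            apply Finset.sum_le_sum
            intro c hc
            have hne : c₀ ≠ c := fun h => hc₀S (h ▸ hc)
            have hΔ := hdist c₀ hc₀ c (hSC hc) hne
            have : (Finset.univ.filter (fun i => c₀ i = c i)).card +
                (Finset.univ.filter (fun i => ¬ c₀ i = c i)).card = n := by
              rw [Finset.card_filter_add_card_filter_not]
              simp
            have hham : hammingDist c₀ c =
                (Finset.univ.filter (fun i => ¬ c₀ i = c i)).card := rfl
            omega
        _ = S.card * (n - Δ) := by rw [Finset.sum_const, smul_eq_mul]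
        _ ≤ d * (n - Δ) := Nat.mul_le_mul_right _ hScard
        _ < n := hdn
    have : ∃ i : Fin n, i ∉ B := by
      by_contra h
      push_neg at h
      have : (Finset.univ : Finset (Fin n)).card ≤ B.card :=
        Finset.card_le_card (fun i _ => h i)
      simp at this
      omega
    obtain ⟨i, hi⟩ := this
    refine ⟨i, fun c hc hEq => hi ?_⟩
    exact Finset.mem_biUnion.2 ⟨c, hc, by simp [hEq]⟩
  refine ⟨main, ?_⟩
  intro j₀ S hScard hj₀S
  obtain ⟨i, hi⟩ := main j₀.val j₀.prop (S.image Subtype.val)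
    (by intro x hx; obtain ⟨c, _, rfl⟩ := Finset.mem_image.1 hx; exact c.prop)
    (by
      intro hmem
      obtain ⟨c, hc, hcv⟩ := Finset.mem_image.1 hmem
      exact hj₀S (Subtype.ext hcv ▸ hc))
    (le_trans Finset.card_image_le (le_of_eq hScard))
  refine ⟨(i, j₀.val i), by simp, fun j hj => ?_⟩
  have := hi j.val (Finset.mem_image.2 ⟨j, hj, rfl⟩)
  simp only [decide_eq_false_iff_not]
  exact fun h => this (h.symm)
end

section
/- Let F be a finite field with q = |F| elements, and let n, r be integers with 2 ≤ r ≤ n ≤ q. Set d = ⌊(n − 1)/(r − 1)⌋. Then there exists a Boolean matrix T with q·n rows and q^r columns such that: (1) T is d-disjunct; (2) every row of T has Hamming weight exactly q^(r−1); and (3) every column of T has Hamming weight exactly n. In particular, if q ≥ 3 then the weight q^(r−1) of every row is strictly less than half the number q^r of columns. -/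
/-!
Kautz–Singleton construction. Fix distinct points `x₁, …, xₙ` of `F` and let the columns be
the polynomials `p` of degree `< r`, the rows the pairs `(a, i) ∈ F × Fin n`, with a `1` at
`((a, i), p)` iff `p(xᵢ) = a`. A column meets exactly one row for each `i`, so has weight `n`;
evaluation at `xᵢ` is a surjective linear map on the `q^r` polynomials, so every row has weight
`q^(r-1)`. Two distinct polynomials of degree `< r` agree at most at `r - 1` of the points, so
`d` columns other than `p` agree with `p` at most at `d (r - 1) ≤ n - 1` positions; at any
remaining position `i` the row `(p(xᵢ), i)` separates `p` from them.
-/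

open Finset Polynomial

theorem Disjunct.comp {ρ ρ' κ κ' : Type*} {T : ρ → κ → Bool} {d : ℕ} (hT : Disjunct T d)
    {g : ρ' → ρ} (hg : g.Surjective) (e : κ' ↪ κ) :
    Disjunct (fun i j => T (g i) (e j)) d := by
  classical
  intro j₀ S hS hj₀
  obtain ⟨i, hi₀, hiS⟩ := hT (e j₀) (S.map e) (by simpa) (by simpa using hj₀)
  obtain ⟨i', rfl⟩ := hg i
  exact ⟨i', hi₀, fun j hj => hiS _ (mem_map_of_mem e hj)⟩

section CodeMatrix

variable {α ι κ : Type*} [DecidableEq α]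

/-- Concatenation of the outer code `c` with the identity code of the alphabet `α`. -/
def codeMatrix (c : κ → ι → α) (row : α × ι) (j : κ) : Bool :=
  decide (c j row.2 = row.1)

theorem codeMatrix_disjunct [Fintype ι] {c : κ → ι → α} {m d : ℕ}
    (hagree : ∀ j j', j ≠ j' → #{i | c j i = c j' i} ≤ m) (hd : d * m < Fintype.card ι) :
    Disjunct (codeMatrix c) d := by
  classical
  intro j₀ S hS hj₀
  set covered := S.biUnion fun j => ({i | c j i = c j₀ i} : Finset ι)
  have hcovered : #covered < #(univ : Finset ι) := calc
    #covered ≤ ∑ j ∈ S, #{i | c j i = c j₀ i} := card_biUnion_le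
    _ ≤ ∑ _j ∈ S, m := sum_le_sum fun j hj => hagree j j₀ (ne_of_mem_of_not_mem hj hj₀)
    _ = d * m := by rw [sum_const, hS, smul_eq_mul]
    _ < #(univ : Finset ι) := by rwa [card_univ]
  obtain ⟨i, -, hi⟩ := exists_mem_notMem_of_card_lt_card hcovered
  refine ⟨(c j₀ i, i), by simp [codeMatrix], fun j hj => ?_⟩
  simp only [codeMatrix, decide_eq_false_iff_not]
  exact fun h => hi (mem_biUnion.2 ⟨j, hj, by simpa using h⟩)

theorem card_codeMatrix_col [Fintype α] [Fintype ι] (c : κ → ι → α) (j : κ) :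
    #{row | codeMatrix c row j = true} = Fintype.card ι := by
  rw [← card_univ]
  refine card_nbij' Prod.snd (fun i => (c j i, i)) (by simp) (by simp [codeMatrix]) ?_
    (fun _ _ => rfl)
  intro row hrow
  simp_all [codeMatrix]

theorem card_codeMatrix_row [Fintype κ] (c : κ → ι → α) (row : α × ι) :
    #{j | codeMatrix c row j = true} = #{j | c j row.2 = row.1} := by
  simp [codeMatrix]

end CodeMatrix

theorem AddMonoidHom.card_mul_card_fiber {G H : Type*} [AddGroup G] [Fintype G] [AddMonoid H]
    [Fintype H] [DecidableEq H] (f : G →+ H) (hf : Function.Surjective f) (y : H) :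
    Fintype.card H * #{g | f g = y} = Fintype.card G := by
  calc Fintype.card H * #{g | f g = y}
      = ∑ z : H, #{g | f g = z} := by
        rw [← card_univ, ← smul_eq_mul, ← sum_const]
        exact sum_congr rfl fun z _ => card_fiber_eq_of_mem_range f (hf y) (hf z)
    _ = Fintype.card G := (card_eq_sum_card_fiberwise fun _ _ => mem_univ _).symm

theorem Polynomial.card_eval_eq_le_natDegree_sub {R ι : Type*} [CommRing R] [IsDomain R]
    [DecidableEq R] [Fintype ι] {v : ι → R} (hv : v.Injective) {p q : R[X]} (hpq : p ≠ q) :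
    #{i | p.eval (v i) = q.eval (v i)} ≤ (p - q).natDegree := by
  by_contra! h
  refine hpq (eq_of_degree_sub_lt_of_eval_index_eq {i | p.eval (v i) = q.eval (v i)} hv.injOn ?_
    (by simp))
  exact degree_le_natDegree.trans_lt (by exact_mod_cast h)

section ReedSolomon

variable (F : Type*) [Field F] (r : ℕ)

noncomputable def evalCoeffs (x : F) : (Fin r → F) →ₗ[F] F :=
  leval x ∘ₗ (degreeLT F r).subtype ∘ₗ (degreeLTEquiv F r).symm.toLinearMap

variable {F r}

theorem evalCoeffs_surjective (hr : 0 < r) (x : F) : Function.Surjective (evalCoeffs F r x) := by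
  intro z
  have hz : C z ∈ degreeLT F r := mem_degreeLT.2 (degree_C_le.trans_lt (by exact_mod_cast hr))
  exact ⟨degreeLTEquiv F r ⟨C z, hz⟩, by simp [evalCoeffs]⟩

theorem card_evalCoeffs_eq [Fintype F] [DecidableEq F] (hr : 0 < r) (x y : F) :
    #{a | evalCoeffs F r x a = y} = Fintype.card F ^ (r - 1) := by
  have h := (evalCoeffs F r x).toAddMonoidHom.card_mul_card_fiber (evalCoeffs_surjective hr x) y
  rw [Fintype.card_fun, Fintype.card_fin, ← mul_pow_sub_one hr.ne'] at h
  exact Nat.eq_of_mul_eq_mul_left Fintype.card_pos h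

theorem card_evalCoeffs_agree_le [DecidableEq F] {ι : Type*} [Fintype ι] {v : ι → F}
    (hv : v.Injective) {a b : Fin r → F} (hab : a ≠ b) :
    #{i | evalCoeffs F r (v i) a = evalCoeffs F r (v i) b} ≤ r - 1 := by
  let p := (degreeLTEquiv F r).symm a
  let q := (degreeLTEquiv F r).symm b
  have hpq : (p : F[X]) ≠ q := fun h => hab ((degreeLTEquiv F r).symm.injective (Subtype.ext h))
  have hdeg : ((p : F[X]) - q).natDegree ≤ r - 1 := by
    have := (natDegree_lt_iff_degree_lt (sub_ne_zero.2 hpq)).2 (mem_degreeLT.1 (sub_mem p.2 q.2))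
    omega
  exact (card_eval_eq_le_natDegree_sub hv hpq).trans hdeg

end ReedSolomon

/-- Lemma 1: For a finite field `F` with `q` elements and `2 ≤ r ≤ n ≤ q`,
with `d = ⌊(n-1)/(r-1)⌋`, there is a `(q·n) × (q^r)` Boolean matrix that is `d`-disjunct,
whose every row has weight exactly `q^(r-1)` and every column weight exactly `n`;
moreover if `q ≥ 3` then the row weight `q^(r-1)` is less than half the number of
columns `q^r`. -/
theorem exists_disjunct_constant_weight {F : Type*} [Field F] [Fintype F] {n r : ℕ}
    (hr : 2 ≤ r) (hrn : r ≤ n) (hnq : n ≤ Fintype.card F) :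
    ∃ T : Fin (Fintype.card F * n) → Fin (Fintype.card F ^ r) → Bool,
      Disjunct T ((n - 1) / (r - 1)) ∧
      (∀ i, (Finset.univ.filter (fun j => T i j = true)).card = Fintype.card F ^ (r - 1)) ∧
      (∀ j, (Finset.univ.filter (fun i => T i j = true)).card = n) ∧
      (3 ≤ Fintype.card F → 2 * Fintype.card F ^ (r - 1) < Fintype.card F ^ r) := by
  classical
  set q := Fintype.card F
  obtain ⟨x⟩ : Nonempty (Fin n ↪ F) := Function.Embedding.nonempty_of_card_le (by simpa using hnq)
  let c : (Fin r → F) → Fin n → F := fun a i => evalCoeffs F r (x i) a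
  let eRow : Fin (q * n) ≃ F × Fin n := Fintype.equivOfCardEq (by simp [q])
  let eCol : Fin (q ^ r) ≃ (Fin r → F) := Fintype.equivOfCardEq (by simp [q])
  refine ⟨fun i j => codeMatrix c (eRow i) (eCol j), ?_, fun i => ?_, fun j => ?_, fun hq => ?_⟩
  · have hd : (n - 1) / (r - 1) * (r - 1) < Fintype.card (Fin n) := by
      have := Nat.div_mul_le_self (n - 1) (r - 1)
      simp only [Fintype.card_fin]
      omega
    exact (codeMatrix_disjunct (fun a b hab => card_evalCoeffs_agree_le x.injective hab) hd).comp
      eRow.surjective eCol.toEmbedding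
  · rw [card_equiv eCol (t := {a | codeMatrix c (eRow i) a}) (by simp),
      card_codeMatrix_row]
    exact card_evalCoeffs_eq (by omega) _ _
  · rw [card_equiv eRow (t := {row | codeMatrix c row (eCol j)}) (by simp),
      card_codeMatrix_col, Fintype.card_fin]
  · rw [← mul_pow_sub_one (by omega : r ≠ 0)]
    exact Nat.mul_lt_mul_of_pos_right (by omega) (pow_pos Fintype.card_pos _)
end

section
/- Let T be a Boolean matrix with rows indexed by Fin t and columns indexed by Fin N, and let d ≥ 1 be an integer with d + 1 ≤ N. Then T is d-disjunct if and only if for every injective map σ : Fin (d+1) → Fin N there exists an injective map ρ : Fin (d+1) → Fin t such that for all a, b ∈ Fin (d+1), T (ρ a) (σ b) = true if and only if a = b; that is, every d+1 columns of T contain a (d+1) × (d+1) identity submatrix up to permutation. -/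
/-- A `t × N` Boolean matrix is `d`-disjunct iff every `d + 1` columns
contain a `(d+1) × (d+1)` identity submatrix up to permutation. -/
theorem disjunct_iff_identity_submatrix {t N d : ℕ} (hd : 1 ≤ d) (hdN : d + 1 ≤ N)
    (T : Fin t → Fin N → Bool) :
    Disjunct T d ↔
      ∀ σ : Fin (d + 1) → Fin N, Function.Injective σ →
        ∃ ρ : Fin (d + 1) → Fin t, Function.Injective ρ ∧
          ∀ a b : Fin (d + 1), (T (ρ a) (σ b) = true ↔ a = b) := by
  constructor
  · intro hT σ hσ
    -- for each a, apply disjunctness to column σ a and the other columns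
    have hSa : ∀ a : Fin (d + 1),
        ∃ i : Fin t, T i (σ a) = true ∧
          ∀ j ∈ Finset.image σ (Finset.univ.erase a), T i j = false := by
      intro a
      apply hT (σ a)
      · rw [Finset.card_image_of_injective _ hσ,
          Finset.card_erase_of_mem (Finset.mem_univ a), Finset.card_univ,
          Fintype.card_fin]
        omega
      · intro hmem
        obtain ⟨b, hb, hba⟩ := Finset.mem_image.mp hmem
        exact (Finset.ne_of_mem_erase hb) (hσ hba)
    choose ρ hρ1 hρ2 using hSa
    have key : ∀ a b : Fin (d + 1), T (ρ a) (σ b) = true ↔ a = b := by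
      intro a b
      constructor
      · intro h
        by_contra hne
        have : σ b ∈ Finset.image σ (Finset.univ.erase a) :=
          Finset.mem_image_of_mem σ (Finset.mem_erase.mpr ⟨fun h' => hne h'.symm,
            Finset.mem_univ b⟩)
        rw [hρ2 a (σ b) this] at h
        exact Bool.false_ne_true h
      · rintro rfl; exact hρ1 a
    refine ⟨ρ, ?_, key⟩
    intro a b hab
    have h1 : T (ρ a) (σ a) = true := hρ1 a
    rw [hab] at h1
    exact ((key b a).mp h1).symm
  · intro h j₀ S hScard hj₀
    set S' : Finset (Fin N) := insert j₀ S with hS'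
    have hcard : S'.card = d + 1 := by
      rw [hS', Finset.card_insert_of_notMem hj₀, hScard]
    let e : Fin (d + 1) ≃ S' := (S'.equivFin.trans (finCongr hcard)).symm
    let σ : Fin (d + 1) → Fin N := fun k => (e k : Fin N)
    have hσ : Function.Injective σ :=
      Subtype.val_injective.comp e.injective
    obtain ⟨ρ, hρinj, hkey⟩ := h σ hσ
    have hj₀' : j₀ ∈ S' := Finset.mem_insert_self j₀ S
    set a₀ : Fin (d + 1) := e.symm ⟨j₀, hj₀'⟩ with ha₀
    have hσa₀ : σ a₀ = j₀ := by simp [σ, ha₀]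
    refine ⟨ρ a₀, by rw [← hσa₀]; exact (hkey a₀ a₀).mpr rfl, ?_⟩
    intro j hj
    have hj' : j ∈ S' := Finset.mem_insert_of_mem hj
    set b : Fin (d + 1) := e.symm ⟨j, hj'⟩ with hb
    have hσb : σ b = j := by simp [σ, hb]
    have hne : a₀ ≠ b := by
      intro hEq
      have : j₀ = j := by rw [← hσa₀, ← hσb, hEq]
      exact hj₀ (this ▸ hj)
    have : ¬ T (ρ a₀) (σ b) = true := fun hc => hne ((hkey a₀ b).mp hc)
    rw [hσb] at this
    exact Bool.not_eq_true _ |>.mp this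
end

section
/- Let m ≥ 1 be an integer, N = 2^m, and let M be the SAFFRON matrix. Then for every nonempty set S of column indices, the Hamming weight of the union ⋁_{j∈S} M_j equals m plus the number of bit positions i with 0 ≤ i < m for which there exist j, j' ∈ S with Nat.testBit j i ≠ Nat.testBit j' i. -/
/-!
Row `i < m` of the union is set iff some column of `S` has bit `i` equal to `1`, and row
`m + i` iff some column has bit `i` equal to `0`. As `S` is nonempty, every bit position is
counted at least once, and by inclusion–exclusion it is counted twice exactly when `S`
contains columns disagreeing in that bit.
-/

/-- The SAFFRON matrix for `N = 2 ^ m`: rows indexed by `Fin (2 * m)`, columns by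
`Fin (2 ^ m)`; row `i < m` is the `i`-th bit of the column index, row `m ≤ i < 2m`
is the complement of the `(i - m)`-th bit. -/
def saffron (m : ℕ) (i : Fin (2 * m)) (j : Fin (2 ^ m)) : Bool :=
  if (i : ℕ) < m then Nat.testBit (j : ℕ) (i : ℕ) else !Nat.testBit (j : ℕ) ((i : ℕ) - m)

open Finset

theorem card_filter_add_card_filter_of_forall_or {α : Type*} [DecidableEq α] (s : Finset α)
    (p q : α → Prop) [DecidablePred p] [DecidablePred q] (h : ∀ a ∈ s, p a ∨ q a) :
    #(s.filter p) + #(s.filter q) = #s + #(s.filter fun a => p a ∧ q a) := by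
  rw [← card_union_add_card_inter, ← filter_or, ← filter_and, filter_true_of_mem h]

theorem exists_true_and_exists_false_iff_exists_ne {β : Type*} (S : Finset β) (f : β → Bool) :
    ((∃ j ∈ S, f j = true) ∧ ∃ j ∈ S, f j = false) ↔ ∃ j ∈ S, ∃ j' ∈ S, f j ≠ f j' := by
  constructor
  · rintro ⟨⟨j, hj, hjt⟩, j', hj', hj'f⟩
    exact ⟨j, hj, j', hj', by simp [hjt, hj'f]⟩
  · rintro ⟨j, hj, j', hj', hne⟩
    cases hfj : f j <;> rw [hfj] at hne
    · exact ⟨⟨j', hj', Bool.not_eq_false _ ▸ Ne.symm hne⟩, j, hj, hfj⟩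
    · exact ⟨⟨j, hj, hfj⟩, j', hj', Bool.not_eq_true _ ▸ Ne.symm hne⟩

theorem card_filter_saffron_union (m : ℕ) (S : Finset (Fin (2 ^ m))) :
    #(univ.filter fun i : Fin (2 * m) => ∃ j ∈ S, saffron m i j = true)
      = #((range m).filter fun i => ∃ j ∈ S, Nat.testBit (j : ℕ) i = true)
        + #((range m).filter fun i => ∃ j ∈ S, Nat.testBit (j : ℕ) i = false) := by
  rw [card_filter, card_filter, card_filter]
  refine (Fin.sum_univ_eq_sum_range (fun i => if ∃ j ∈ S, (if i < m then Nat.testBit (j : ℕ) i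
      else !Nat.testBit (j : ℕ) (i - m)) = true then 1 else 0) _).trans ?_
  rw [two_mul, sum_range_add]
  congr 1 <;> refine sum_congr rfl fun i hi => ?_
  · simp [mem_range.mp hi]
  · simp

theorem saffron_union_weight_general (m : ℕ)
    (S : Finset (Fin (2 ^ m))) (hS : S.Nonempty) :
    (Finset.univ.filter (fun i : Fin (2 * m) => ∃ j ∈ S, saffron m i j = true)).card
      = m + ((Finset.range m).filter
          (fun i => ∃ j ∈ S, ∃ j' ∈ S,
            Nat.testBit (j : ℕ) i ≠ Nat.testBit (j' : ℕ) i)).card := by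
  obtain ⟨j₀, hj₀⟩ := hS
  have hbit : ∀ i ∈ range m, (∃ j ∈ S, Nat.testBit (j : ℕ) i = true) ∨
      ∃ j ∈ S, Nat.testBit (j : ℕ) i = false := fun i _ => by
    cases h : Nat.testBit (j₀ : ℕ) i
    exacts [Or.inr ⟨j₀, hj₀, h⟩, Or.inl ⟨j₀, hj₀, h⟩]
  rw [card_filter_saffron_union, card_filter_add_card_filter_of_forall_or _ _ _ hbit, card_range]
  simp only [exists_true_and_exists_false_iff_exists_ne S fun j => Nat.testBit (j : ℕ) _]

/-- For every nonempty set `S` of columns of the SAFFRON matrix, the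
Hamming weight of the union `⋁_{j ∈ S} M_j` is `m` plus the number of bit positions
`i < m` on which two members of `S` disagree. -/
theorem saffron_union_weight (m : ℕ) (hm : 1 ≤ m)
    (S : Finset (Fin (2 ^ m))) (hS : S.Nonempty) :
    (Finset.univ.filter (fun i : Fin (2 * m) => ∃ j ∈ S, saffron m i j = true)).card
      = m + ((Finset.range m).filter
          (fun i => ∃ j ∈ S, ∃ j' ∈ S,
            Nat.testBit (j : ℕ) i ≠ Nat.testBit (j' : ℕ) i)).card :=
  saffron_union_weight_general m S hS
end

section
/- Let m ≥ 1 be an integer, N = 2^m, and let M be the SAFFRON matrix. Then for every set S of column indices (possibly empty), the Hamming weight of ⋁_{j∈S} M_j equals m if and only if |S| = 1. Moreover, if |S| ≥ 2 then the Hamming weight of ⋁_{j∈S} M_j is strictly greater than m, and if S = ∅ it is 0. -/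
open Finset

section SumCardImage

variable {α β ι : Type*} [Fintype ι] [DecidableEq β] (f : ι → α → β) {S : Finset α}

theorem card_filter_exists_apply_eq [Fintype β] :
    #{p : β × ι | ∃ j ∈ S, f p.2 j = p.1} = ∑ i, #(S.image (f i)) := by
  rw [card_filter, Fintype.sum_prod_type_right]
  refine sum_congr rfl fun i _ => ?_
  rw [← card_filter]
  congr 1
  ext c
  simp

theorem card_lt_sum_card_image (hf : Function.Injective (Function.swap f)) (hS : 1 < #S) :
    Fintype.card ι < ∑ i, #(S.image (f i)) := by
  obtain ⟨j, hj, k, hk, hjk⟩ := one_lt_card.1 hS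
  obtain ⟨i, hi⟩ : ∃ i, f i j ≠ f i k := by
    by_contra! h
    exact hjk (hf (funext h))
  have hpos (i : ι) : 1 ≤ #(S.image (f i)) := (Nonempty.image ⟨j, hj⟩ (f i)).card_pos
  have hsep : 1 < #(S.image (f i)) :=
    one_lt_card.2 ⟨f i j, mem_image_of_mem _ hj, f i k, mem_image_of_mem _ hk, hi⟩
  simpa using sum_lt_sum (fun i (_ : i ∈ univ) => hpos i) ⟨i, mem_univ i, hsep⟩

theorem sum_card_image_eq_card_iff [Nonempty ι] (hf : Function.Injective (Function.swap f)) :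
    ∑ i, #(S.image (f i)) = Fintype.card ι ↔ #S = 1 := by
  refine ⟨fun h => ?_, fun h => ?_⟩
  · rcases Nat.lt_trichotomy #S 1 with hS | hS | hS
    · simp only [card_eq_zero.1 (Nat.lt_one_iff.1 hS), image_empty, card_empty, sum_const_zero] at h
      exact absurd h.symm Fintype.card_ne_zero
    · exact hS
    · exact absurd h (card_lt_sum_card_image f hf hS).ne'
  · obtain ⟨a, rfl⟩ := card_eq_one.1 h
    simp

end SumCardImage

theorem Fin.injective_testBit_two_pow (m : ℕ) :
    Function.Injective fun (j : Fin (2 ^ m)) (b : Fin m) => Nat.testBit j b := by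
  intro j k h
  refine Fin.ext (Nat.eq_of_testBit_eq fun b => ?_)
  by_cases hb : b < m
  · exact congrFun h ⟨b, hb⟩
  · have hpow : 2 ^ m ≤ 2 ^ b := Nat.pow_le_pow_right two_pos (not_lt.1 hb)
    rw [Nat.testBit_lt_two_pow (j.2.trans_le hpow), Nat.testBit_lt_two_pow (k.2.trans_le hpow)]

def saffronRowEquiv (m : ℕ) : Bool × Fin m ≃ Fin (2 * m) :=
  (Equiv.boolProdEquivSum _).trans <| (Equiv.sumComm _ _).trans <|
    finSumFinEquiv.trans (finCongr (two_mul m).symm)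

theorem saffron_saffronRowEquiv (m : ℕ) (c : Bool) (b : Fin m) (j : Fin (2 ^ m)) :
    saffron m (saffronRowEquiv m (c, b)) j = true ↔ Nat.testBit j b = c := by
  cases c <;> simp [saffronRowEquiv, saffron]

theorem card_saffron_union_eq_sum (m : ℕ) (S : Finset (Fin (2 ^ m))) :
    #{i : Fin (2 * m) | ∃ j ∈ S, saffron m i j = true} =
      ∑ b : Fin m, #(S.image fun j : Fin (2 ^ m) => Nat.testBit j b) := by
  rw [← card_filter_exists_apply_eq (fun (b : Fin m) (j : Fin (2 ^ m)) => Nat.testBit j b)]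
  refine card_equiv (saffronRowEquiv m).symm fun i => ?_
  obtain ⟨⟨c, b⟩, rfl⟩ := (saffronRowEquiv m).surjective i
  simp [saffron_saffronRowEquiv]

/-- For any set `S` of columns of the SAFFRON matrix, the Hamming weight
of `⋁_{j ∈ S} M_j` equals `m` iff `|S| = 1`; if `|S| ≥ 2` the weight exceeds `m`; and
if `S = ∅` the weight is `0`. -/
theorem saffron_union_weight_eq_iff (m : ℕ) (hm : 1 ≤ m) (S : Finset (Fin (2 ^ m))) :
    ((Finset.univ.filter (fun i : Fin (2 * m) => ∃ j ∈ S, saffron m i j = true)).card = m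
        ↔ S.card = 1) ∧
    (2 ≤ S.card →
      m < (Finset.univ.filter (fun i : Fin (2 * m) => ∃ j ∈ S, saffron m i j = true)).card) ∧
    (S = ∅ →
      (Finset.univ.filter (fun i : Fin (2 * m) => ∃ j ∈ S, saffron m i j = true)).card = 0) := by
  have : Nonempty (Fin m) := ⟨⟨0, hm⟩⟩
  have hf := Fin.injective_testBit_two_pow m
  rw [card_saffron_union_eq_sum]
  refine ⟨by simpa using sum_card_image_eq_card_iff _ hf,
    fun hS => by simpa using card_lt_sum_card_image _ hf hS, ?_⟩
  rintro rfl
  simp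
end

section
/- Let m ≥ 1 be an integer, N = 2^m, and let M be the SAFFRON matrix. If S is a set of column indices and j₀ ∈ Fin N is such that ⋁_{j∈S} M_j equals the column of M indexed by j₀ (as Boolean vectors in Fin (2m) → Bool), then S = {j₀}. In particular, distinct columns of M are distinct and no column of M is the union of two or more other columns. -/
/-- If the union of the SAFFRON columns indexed by a set `S` equals the
single column indexed by `j₀`, then `S = {j₀}`. -/
theorem saffron_union_eq_column (m : ℕ) (hm : 1 ≤ m)
    (S : Finset (Fin (2 ^ m))) (j₀ : Fin (2 ^ m))
    (h : ∀ i : Fin (2 * m), (∃ j ∈ S, saffron m i j = true) ↔ saffron m i j₀ = true) :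
    S = {j₀} := by
  have key : ∀ j ∈ S, j = j₀ := by
    intro j hj
    have hbit : ∀ k, Nat.testBit (j : ℕ) k = Nat.testBit (j₀ : ℕ) k := by
      intro k
      by_cases hk : k < m
      · by_cases hb : Nat.testBit (j : ℕ) k = true
        · have := (h ⟨k, by omega⟩).mp ⟨j, hj, by simpa [saffron, hk] using hb⟩
          simpa [saffron, hk, hb] using this
        · have hb' : Nat.testBit (j : ℕ) k = false := by simpa using hb
          have := (h ⟨m + k, by omega⟩).mp
            ⟨j, hj, by simp [saffron, hk, hb', Nat.add_sub_cancel_left]⟩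
          simp only [saffron, Nat.add_sub_cancel_left] at this
          rw [if_neg (by omega)] at this
          simp only [Bool.not_eq_true'] at this
          rw [hb', this]
      · have h1 : Nat.testBit (j : ℕ) k = false :=
          Nat.testBit_lt_two_pow (lt_of_lt_of_le j.isLt (Nat.pow_le_pow_right (by norm_num) (by omega)))
        have h2 : Nat.testBit (j₀ : ℕ) k = false :=
          Nat.testBit_lt_two_pow (lt_of_lt_of_le j₀.isLt (Nat.pow_le_pow_right (by norm_num) (by omega)))
        rw [h1, h2]
    exact Fin.ext (Nat.eq_of_testBit_eq hbit)
  have hne : S.Nonempty := by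
    by_cases hb : Nat.testBit (j₀ : ℕ) 0 = true
    · obtain ⟨j, hj, -⟩ := (h ⟨0, by omega⟩).mpr (by have h0 : (0:ℕ) < m := hm; simpa [saffron, h0] using hb)
      exact ⟨j, hj⟩
    · have hb' : Nat.testBit (j₀ : ℕ) 0 = false := by simpa using hb
      obtain ⟨j, hj, -⟩ := (h ⟨m, by omega⟩).mpr (by simp [saffron, hb'])
      exact ⟨j, hj⟩
  obtain ⟨j, hj⟩ := hne
  have := key j hj
  subst this
  ext x
  simp only [Finset.mem_singleton]
  exact ⟨fun hx => key x hx, fun hx => hx ▸ hj⟩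
end

section
/- Let (Ω, μ) be a probability space, c ≥ 1 an integer, and X : Fin c → Ω → Bool a mutually independent family of Boolean random variables such that μ({ω : X s ω = true}) ≥ p₀ for every s ∈ Fin c, where p₀ ∈ (0, 1]. Let λ ∈ (0, 1) and ξ > 0 satisfy 1/2 + ξ ≤ (1 − λ)·p₀. Then μ({ω : (|{s : X s ω = true}| : ℝ) ≤ (1/2 + ξ)·c}) ≤ exp(−λ²·p₀·c/2). In particular, the probability that the true values fail to form a strict majority, μ({ω : 2·|{s : X s ω = true}| ≤ c}), is at most exp(−λ²·p₀·c/2). -/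
/-!
Chernoff's method for the number `S` of true `X s`: for `t = log (1 - λ) ≤ 0`, Markov's
inequality for `exp (t S)` and independence give
`P(S ≤ (1 - λ) p₀ c) ≤ exp (-t (1 - λ) p₀ c) ∏ E[exp (t 1{X s})]`, and each factor is
`1 - λ P(X s) ≤ exp (-λ p₀)`. The elementary bound `(u² - 1) / 2 ≤ u log u` on `(0, 1]`, at
`u = 1 - λ`, turns the exponent into `-λ² p₀ c / 2`. Both events of the theorem lie inside
`{S ≤ (1 - λ) p₀ c}` because `1/2 + ξ ≤ (1 - λ) p₀`.
-/

open MeasureTheory ProbabilityTheory Real Finset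

theorem Real.sq_sub_one_div_two_le_mul_log {u : ℝ} (hu0 : 0 < u) (hu1 : u ≤ 1) :
    (u ^ 2 - 1) / 2 ≤ u * log u := by
  have hsinh : (u - u⁻¹) / 2 ≤ log u := by
    rw [← sinh_log hu0]
    exact sinh_le_self_iff.mpr (log_nonpos hu0.le hu1)
  have hu : u * u⁻¹ = 1 := mul_inv_cancel₀ hu0.ne'
  nlinarith [mul_le_mul_of_nonneg_left hsinh hu0.le]

section BooleanCount

variable {Ω : Type*} [MeasurableSpace Ω] {μ : Measure Ω} [IsProbabilityMeasure μ]

lemma exp_mul_ite_bool (t : ℝ) (b : Bool) :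
    exp (t * if b = true then 1 else 0) = 1 + if b = true then exp t - 1 else 0 := by
  cases b <;> simp

lemma mgf_ite_bool {B : Ω → Bool} (hB : Measurable B) (t : ℝ) :
    mgf (fun ω => if B ω = true then (1 : ℝ) else 0) μ t
      = 1 + (exp t - 1) * μ.real {ω | B ω = true} := by
  have hA : MeasurableSet {ω | B ω = true} := hB (measurableSet_singleton true)
  have hfun : (fun ω => exp (t * if B ω = true then 1 else 0))
      = fun ω => 1 + {ω | B ω = true}.indicator (fun _ => exp t - 1) ω := by
    funext ω
    simp only [exp_mul_ite_bool, Set.indicator_apply, Set.mem_ofPred_eq]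
  rw [mgf, hfun, integral_add (integrable_const 1) ((integrable_const _).indicator hA),
    integral_indicator_const _ hA, integral_const, probReal_univ, smul_eq_mul, smul_eq_mul]
  ring

lemma mgf_ite_bool_le {B : Ω → Bool} (hB : Measurable B) {p t : ℝ} (ht : t ≤ 0)
    (hp : p ≤ μ.real {ω | B ω = true}) :
    mgf (fun ω => if B ω = true then (1 : ℝ) else 0) μ t ≤ exp (p * (exp t - 1)) := by
  have het : exp t - 1 ≤ 0 := by linarith [exp_le_one_iff.mpr ht]
  calc mgf (fun ω => if B ω = true then (1 : ℝ) else 0) μ t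
      = 1 + (exp t - 1) * μ.real {ω | B ω = true} := mgf_ite_bool hB t
    _ ≤ p * (exp t - 1) + 1 := by nlinarith
    _ ≤ exp (p * (exp t - 1)) := add_one_le_exp _

variable {ι : Type*} [Fintype ι] {X : ι → Ω → Bool}

lemma measureReal_card_le_le_exp (hmeas : ∀ i, Measurable (X i)) (hindep : iIndepFun X μ)
    {p t : ℝ} (ht : t ≤ 0) (hp : ∀ i, p ≤ μ.real {ω | X i ω = true}) (a : ℝ) :
    μ.real {ω | (#{i | X i ω = true} : ℝ) ≤ a}
      ≤ exp (-t * a + Fintype.card ι * (p * (exp t - 1))) := by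
  set Y : ι → Ω → ℝ := fun i ω => if X i ω = true then 1 else 0
  let f : Bool → ℝ := fun b => if b = true then 1 else 0
  have hYmeas : ∀ i, Measurable (Y i) := fun i => (measurable_from_top (f := f)).comp (hmeas i)
  have hYindep : iIndepFun Y μ := hindep.comp (fun _ => f) fun _ => measurable_from_top
  have hcount : ∀ ω, (#{i | X i ω = true} : ℝ) = (∑ i, Y i) ω := by
    intro ω
    rw [natCast_card_filter, Finset.sum_apply]
  have hint : ∀ i ∈ (univ : Finset ι), Integrable (fun ω => exp (t * Y i ω)) μ := by
    intro i _
    refine Integrable.of_bound (by fun_prop) 1 (ae_of_all _ fun ω => ?_)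
    simp only [Y, exp_mul_ite_bool, norm_eq_abs]
    split_ifs <;> simp [exp_le_one_iff.mpr ht]
  calc μ.real {ω | (#{i | X i ω = true} : ℝ) ≤ a}
      = μ.real {ω | (∑ i, Y i) ω ≤ a} := by simp only [hcount]
    _ ≤ exp (-t * a) * mgf (∑ i, Y i) μ t :=
      measure_le_le_exp_mul_mgf a ht (hYindep.integrable_exp_mul_sum hYmeas hint)
    _ = exp (-t * a) * ∏ i, mgf (Y i) μ t := by rw [hYindep.mgf_sum hYmeas]
    _ ≤ exp (-t * a) * ∏ _i : ι, exp (p * (exp t - 1)) := by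
      gcongr with i
      · exact fun i _ => mgf_nonneg
      · exact mgf_ite_bool_le (hmeas i) ht (hp i)
    _ = exp (-t * a + Fintype.card ι * (p * (exp t - 1))) := by
      rw [prod_const, card_univ, ← exp_nat_mul, exp_add]

theorem measureReal_card_le_one_sub_mul_le_exp (hmeas : ∀ i, Measurable (X i))
    (hindep : iIndepFun X μ)
    {p lam : ℝ} (hp0 : 0 ≤ p) (hp : ∀ i, p ≤ μ.real {ω | X i ω = true})
    (hlam0 : 0 ≤ lam) (hlam1 : lam < 1) :
    μ.real {ω | (#{i | X i ω = true} : ℝ) ≤ (1 - lam) * p * Fintype.card ι}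
      ≤ exp (-(lam ^ 2 * p * Fintype.card ι) / 2) := by
  have hu : 0 < 1 - lam := by linarith
  refine (measureReal_card_le_le_exp hmeas hindep (log_nonpos hu.le (by linarith)) hp _).trans ?_
  rw [exp_log hu, exp_le_exp]
  have hlog := Real.sq_sub_one_div_two_le_mul_log hu (by linarith)
  have hpn : 0 ≤ p * Fintype.card ι := by positivity
  nlinarith [mul_le_mul_of_nonneg_left hlog hpn]

end BooleanCount

theorem chernoff_majority_general {Ω : Type*} [MeasurableSpace Ω] (μ : Measure Ω)
    [IsProbabilityMeasure μ] {c : ℕ}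
    (X : Fin c → Ω → Bool) (hmeas : ∀ s, Measurable (X s))
    (hindep : iIndepFun X μ)
    (p₀ : ℝ) (hp₀ : 0 < p₀)
    (hp : ∀ s, ENNReal.ofReal p₀ ≤ μ {ω | X s ω = true})
    (lam ξ : ℝ) (hlam0 : 0 < lam) (hlam1 : lam < 1) (hξ : 0 < ξ)
    (hcond : 1 / 2 + ξ ≤ (1 - lam) * p₀) :
    μ {ω | ((Finset.univ.filter (fun s => X s ω = true)).card : ℝ) ≤ (1 / 2 + ξ) * c}
        ≤ ENNReal.ofReal (Real.exp (-(lam ^ 2 * p₀ * c) / 2)) ∧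
    μ {ω | 2 * (Finset.univ.filter (fun s => X s ω = true)).card ≤ c}
        ≤ ENNReal.ofReal (Real.exp (-(lam ^ 2 * p₀ * c) / 2)) := by
  have hp_real : ∀ s, p₀ ≤ μ.real {ω | X s ω = true} := fun s =>
    (ENNReal.ofReal_le_iff_le_toReal (measure_ne_top _ _)).mp (hp s)
  have hchernoff :=
    measureReal_card_le_one_sub_mul_le_exp hmeas hindep hp₀.le hp_real hlam0.le hlam1
  rw [Fintype.card_fin] at hchernoff
  have hfirst : μ {ω | (#{s | X s ω = true} : ℝ) ≤ (1 / 2 + ξ) * c}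
      ≤ ENNReal.ofReal (exp (-(lam ^ 2 * p₀ * c) / 2)) := by
    refine (measure_mono fun ω hω => ?_).trans
      ((ofReal_measureReal).symm.trans_le (ENNReal.ofReal_le_ofReal hchernoff))
    simp only [Set.mem_ofPred_eq] at hω ⊢
    nlinarith [mul_le_mul_of_nonneg_right hcond (Nat.cast_nonneg c : (0 : ℝ) ≤ c)]
  refine ⟨hfirst, (measure_mono fun ω hω => ?_).trans hfirst⟩
  simp only [Set.mem_ofPred_eq] at hω ⊢
  have : (2 * #{s | X s ω = true} : ℝ) ≤ c := by exact_mod_cast hω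
  nlinarith [mul_nonneg hξ.le (Nat.cast_nonneg c : (0 : ℝ) ≤ c)]

/-- Chernoff-type bound: For mutually independent Boolean random
variables `X 0, …, X (c-1)`, each true with probability at least `p₀`, and
`1/2 + ξ ≤ (1 − lam) · p₀` with `lam ∈ (0,1)`, `ξ > 0`, the probability that at most
`(1/2 + ξ) · c` of them are true is at most `exp(−lam² p₀ c / 2)`; in particular the
probability that the true values fail to form a strict majority is at most
`exp(−lam² p₀ c / 2)`. -/
theorem chernoff_majority {Ω : Type*} [MeasurableSpace Ω] (μ : Measure Ω)
    [IsProbabilityMeasure μ] {c : ℕ} (hc : 1 ≤ c)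
    (X : Fin c → Ω → Bool) (hmeas : ∀ s, Measurable (X s))
    (hindep : iIndepFun X μ)
    (p₀ : ℝ) (hp₀ : 0 < p₀) (hp₀1 : p₀ ≤ 1)
    (hp : ∀ s, ENNReal.ofReal p₀ ≤ μ {ω | X s ω = true})
    (lam ξ : ℝ) (hlam0 : 0 < lam) (hlam1 : lam < 1) (hξ : 0 < ξ)
    (hcond : 1 / 2 + ξ ≤ (1 - lam) * p₀) :
    μ {ω | ((Finset.univ.filter (fun s => X s ω = true)).card : ℝ) ≤ (1 / 2 + ξ) * c}
        ≤ ENNReal.ofReal (Real.exp (-(lam ^ 2 * p₀ * c) / 2)) ∧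
    μ {ω | 2 * (Finset.univ.filter (fun s => X s ω = true)).card ≤ c}
        ≤ ENNReal.ofReal (Real.exp (-(lam ^ 2 * p₀ * c) / 2)) :=
  chernoff_majority_general μ X hmeas hindep p₀ hp₀ hp lam ξ hlam0 hlam1 hξ hcond
end

section
/- (Theorem 1.) Let m ≥ 1 be an integer, N = 2^m, k = 2m, let M be the SAFFRON matrix, let j₀ ∈ Fin N, and let y' : Fin k → Bool be the column of M indexed by j₀, i.e., y' i = M i j₀. Let p₀ ∈ (0, 1], λ ∈ (0, 1), ξ > 0 with 1/2 + ξ ≤ (1 − λ)·p₀, and let δ ∈ (0, 1). Let c ≥ 1 be an integer with c ≥ 2·ln(2m/δ)/(p₀·λ²), and let Y : (Fin k × Fin c) → Ω → Bool be a mutually independent family of Boolean random variables on a probability space (Ω, μ) such that μ({ω : Y (i, s) ω = y' i}) ≥ p₀ for all i ∈ Fin k and s ∈ Fin c. Then μ({ω : ∀ i ∈ Fin k, 2·|{s : Y (i, s) ω = y' i}| > c}) ≥ 1 − δ; that is, with probability at least 1 − δ, coordinatewise strict-majority voting over the c repeated noisy observations recovers the entire column M_{j₀}, and hence identifies the defective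 index j₀. -/
open MeasureTheory ProbabilityTheory

/-! For a fixed row, the number of observations agreeing with the column entry is a sum of
`c` independent indicators whose means are at least `p₀ > 1/2`. Hoeffding's inequality bounds
the probability that they fail to form a strict majority by `exp (-2c (p₀ - 1/2)²)`, and the
hypothesis `1/2 + ξ ≤ (1 - λ) p₀` gives `2 (p₀ - 1/2)² ≥ p₀ λ² / 2`, so by the choice of `c` this
is at most `δ / (2m)`. A union bound over the `2m` rows finishes the proof. -/

open Real Finset
open scoped NNReal

section

variable {Ω : Type*} [MeasurableSpace Ω] {μ : Measure Ω} [IsProbabilityMeasure μ]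

theorem measureReal_sum_le_sum_integral_sub_le {ι : Type*} [Fintype ι] {X : ι → Ω → ℝ}
    (hX : ∀ i, Measurable (X i)) (hindep : iIndepFun X μ)
    (hX01 : ∀ i ω, X i ω ∈ Set.Icc (0 : ℝ) 1) {ε : ℝ} (hε : 0 ≤ ε) :
    μ.real {ω | ∑ i, X i ω ≤ ∑ i, μ[X i] - ε} ≤ exp (-2 * ε ^ 2 / Fintype.card ι) := by
  have hsubG : ∀ i ∈ (univ : Finset ι),
      HasSubgaussianMGF (fun ω ↦ μ[X i] - X i ω) (1 / 4 : ℝ≥0) μ := by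
    intro i _
    have := (hasSubgaussianMGF_of_mem_Icc (hX i).aemeasurable (ae_of_all μ (hX01 i))).neg
    convert this using 1
    · ext ω; simp
    · ext; norm_num
  have hindep' : iIndepFun (fun i ↦ (fun x ↦ μ[X i] - x) ∘ X i) μ :=
    hindep.comp (fun i x ↦ μ[X i] - x) fun i ↦ by fun_prop
  calc μ.real {ω | ∑ i, X i ω ≤ ∑ i, μ[X i] - ε}
      = μ.real {ω | ε ≤ ∑ i, (μ[X i] - X i ω)} := by
        simp only [sum_sub_distrib, le_sub_comm]
    _ ≤ exp (-ε ^ 2 / (2 * ((∑ _i : ι, (1 / 4 : ℝ≥0) : ℝ≥0) : ℝ))) :=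
        HasSubgaussianMGF.measure_sum_ge_le_of_iIndepFun hindep' hsubG hε
    _ = exp (-2 * ε ^ 2 / Fintype.card ι) := by
        congr 1; rw [sum_const, card_univ, nsmul_eq_mul]; push_cast; ring

theorem measureReal_two_mul_card_le_le {ι : Type*} [Fintype ι] {Z : ι → Ω → Bool}
    (hZ : ∀ i, Measurable (Z i)) (hindep : iIndepFun Z μ) (b : ι → Bool) {p : ℝ}
    (hp : 1 / 2 ≤ p) (hZp : ∀ i, p ≤ μ.real {ω | Z i ω = b i}) :
    μ.real {ω | 2 * #{i | Z i ω = b i} ≤ Fintype.card ι}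
      ≤ exp (-2 * Fintype.card ι * (p - 1 / 2) ^ 2) := by
  set n : ℝ := (Fintype.card ι : ℝ) with hn
  set X : ι → Ω → ℝ := fun i ↦ {ω | Z i ω = b i}.indicator 1
  have hagree : ∀ i, MeasurableSet {ω | Z i ω = b i} := fun i ↦ hZ i (measurableSet_singleton _)
  have hX : ∀ i, Measurable (X i) := fun i ↦ measurable_const.indicator (hagree i)
  have hindepX : iIndepFun X μ :=
    hindep.comp (fun i ↦ ({b i} : Set Bool).indicator 1) fun i ↦ .of_discrete
  have hX01 : ∀ i ω, X i ω ∈ Set.Icc (0 : ℝ) 1 := fun i ω ↦ by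
    by_cases h : Z i ω = b i <;> simp [X, h]
  have hsumX : ∀ ω, ∑ i, X i ω = #{i | Z i ω = b i} := fun ω ↦ by
    simp [X, Set.indicator_apply, Finset.sum_boole]
  have hmean : n * p ≤ ∑ i, μ[X i] := by
    calc n * p = ∑ _i : ι, p := by simp [n]
      _ ≤ ∑ i, μ[X i] := sum_le_sum fun i _ ↦ by
          simpa only [X, integral_indicator_one (hagree i)] using hZp i
  calc μ.real {ω | 2 * #{i | Z i ω = b i} ≤ Fintype.card ι}
      ≤ μ.real {ω | ∑ i, X i ω ≤ ∑ i, μ[X i] - n * (p - 1 / 2)} := by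
        refine measureReal_mono (fun ω hω ↦ ?_)
        have h2 : 2 * #{i | Z i ω = b i} ≤ Fintype.card ι := hω
        have : (2 * #{i | Z i ω = b i} : ℝ) ≤ n := by rw [hn]; exact_mod_cast h2
        simp only [Set.mem_ofPred_eq, hsumX]
        linarith
    _ ≤ exp (-2 * (n * (p - 1 / 2)) ^ 2 / n) :=
        measureReal_sum_le_sum_integral_sub_le hX hindepX hX01 (by positivity)
    _ = exp (-2 * n * (p - 1 / 2) ^ 2) := by
        rcases eq_or_ne n 0 with hn0 | hn0
        · simp [hn0]
        · congr 1; field_simp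

theorem one_sub_sum_measure_not_le_measure_forall {ι : Type*} [Fintype ι]
    (P : ι → Ω → Prop) :
    1 - ∑ i, μ {ω | ¬ P i ω} ≤ μ {ω | ∀ i, P i ω} := by
  rw [tsub_le_iff_right, ← measure_univ (μ := μ)]
  calc μ Set.univ ≤ μ {ω | ∀ i, P i ω} + μ {ω | ∀ i, P i ω}ᶜ := measure_univ_le_add_compl _
    _ = μ {ω | ∀ i, P i ω} + μ (⋃ i, {ω | ¬ P i ω}) := by
        congr 2; ext ω; simp
    _ ≤ μ {ω | ∀ i, P i ω} + ∑ i, μ {ω | ¬ P i ω} := by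
        gcongr; exact measure_iUnion_fintype_le _ _

end

theorem mul_sq_div_four_le_sq_sub_half {p lam : ℝ} (hlam : 0 ≤ lam)
    (h : 1 / 2 ≤ (1 - lam) * p) : p * lam ^ 2 / 4 ≤ (p - 1 / 2) ^ 2 := by
  rcases le_or_gt p 0 with hp | hp
  · nlinarith [sq_nonneg (p - 1 / 2), sq_nonneg lam]
  have hlp : lam * p ≤ p - 1 / 2 := by linarith
  have hlp0 : 0 ≤ lam * p := by positivity
  calc p * lam ^ 2 / 4 ≤ (lam * p) ^ 2 := by nlinarith [sq_nonneg lam]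
    _ ≤ (p - 1 / 2) ^ 2 := by gcongr

theorem exp_neg_two_mul_sq_sub_half_le {p lam δ k c : ℝ} (hp : 0 < p) (hlam : 0 < lam)
    (h : 1 / 2 ≤ (1 - lam) * p) (hδ : 0 < δ) (hk : 0 < k) (hc0 : 0 ≤ c)
    (hc : 2 * log (k / δ) / (p * lam ^ 2) ≤ c) :
    exp (-2 * c * (p - 1 / 2) ^ 2) ≤ δ / k := by
  have hlog : 2 * log (k / δ) ≤ c * (p * lam ^ 2) := by
    rwa [div_le_iff₀ (by positivity)] at hc
  have := mul_sq_div_four_le_sq_sub_half hlam.le h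
  calc exp (-2 * c * (p - 1 / 2) ^ 2) ≤ exp (-log (k / δ)) := by gcongr; nlinarith
    _ = δ / k := by rw [exp_neg, exp_log (by positivity), inv_div]

theorem decode_one_defective_general {Ω : Type*} [MeasurableSpace Ω] (μ : Measure Ω)
    [IsProbabilityMeasure μ] (m : ℕ) (hm : 1 ≤ m) (j₀ : Fin (2 ^ m))
    (p₀ lam ξ δ : ℝ) (hp₀0 : 0 < p₀)
    (hlam0 : 0 < lam) (hξ : 0 < ξ)
    (hcond : 1 / 2 + ξ ≤ (1 - lam) * p₀) (hδ0 : 0 < δ)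
    (c : ℕ)
    (hclb : 2 * Real.log (2 * m / δ) / (p₀ * lam ^ 2) ≤ (c : ℝ))
    (Y : Fin (2 * m) × Fin c → Ω → Bool) (hmeas : ∀ p, Measurable (Y p))
    (hindep : iIndepFun Y μ)
    (hp : ∀ (i : Fin (2 * m)) (s : Fin c),
      ENNReal.ofReal p₀ ≤ μ {ω | Y (i, s) ω = saffron m i j₀}) :
    ENNReal.ofReal (1 - δ) ≤
      μ {ω | ∀ i : Fin (2 * m),
        c < 2 * (Finset.univ.filter
          (fun s : Fin c => Y (i, s) ω = saffron m i j₀)).card} := by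
  have hhalf : 1 / 2 ≤ (1 - lam) * p₀ := by linarith
  have hp₀half : 1 / 2 ≤ p₀ := by nlinarith
  have hexp : exp (-2 * c * (p₀ - 1 / 2) ^ 2) ≤ δ / (2 * m) :=
    exp_neg_two_mul_sq_sub_half_le hp₀0 hlam0 hhalf hδ0 (by positivity) c.cast_nonneg hclb
  have hrow : ∀ i, μ {ω | ¬ c < 2 * #{s | Y (i, s) ω = saffron m i j₀}}
      ≤ ENNReal.ofReal (δ / (2 * m)) := fun i ↦ by
    have hprob : ∀ s, p₀ ≤ μ.real {ω | Y (i, s) ω = saffron m i j₀} := fun s ↦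
      (ENNReal.ofReal_le_iff_le_toReal (measure_ne_top _ _)).1 (hp i s)
    have := measureReal_two_mul_card_le_le (fun s ↦ hmeas (i, s))
      (hindep.precomp (Prod.mk_right_injective i)) _ hp₀half hprob
    simp only [not_lt, Fintype.card_fin] at this ⊢
    rw [← ofReal_measureReal]
    exact ENNReal.ofReal_le_ofReal (this.trans hexp)
  calc ENNReal.ofReal (1 - δ) = 1 - ∑ _i : Fin (2 * m), ENNReal.ofReal (δ / (2 * m)) := by
        rw [sum_const, card_univ, Fintype.card_fin, nsmul_eq_mul, ← ENNReal.ofReal_natCast,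
          ← ENNReal.ofReal_mul (by positivity), ENNReal.ofReal_sub _ hδ0.le, ENNReal.ofReal_one]
        congr 2; push_cast; field_simp
    _ ≤ 1 - ∑ i, μ {ω | ¬ c < 2 * #{s | Y (i, s) ω = saffron m i j₀}} :=
        tsub_le_tsub_left (sum_le_sum fun i _ ↦ hrow i) 1
    _ ≤ _ := one_sub_sum_measure_not_le_measure_forall _

/-- Theorem 1: Let `y'` be the column of the SAFFRON matrix indexed by
the defective item `j₀`, and let `Y (i, s)` (`i < k = 2m`, `s < c`) be mutually
independent noisy observations, each agreeing with `y' i` with probability at least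
`p₀`, where `1/2 + ξ ≤ (1 − lam) p₀` and `c ≥ 2 ln(2m/δ)/(p₀ lam²)`. Then with
probability at least `1 − δ`, for every row `i` a strict majority of the `c`
observations equals `y' i`, so majority voting recovers the whole column `M_{j₀}` and
hence identifies `j₀`. -/
theorem decode_one_defective {Ω : Type*} [MeasurableSpace Ω] (μ : Measure Ω)
    [IsProbabilityMeasure μ] (m : ℕ) (hm : 1 ≤ m) (j₀ : Fin (2 ^ m))
    (p₀ lam ξ δ : ℝ) (hp₀0 : 0 < p₀) (hp₀1 : p₀ ≤ 1)
    (hlam0 : 0 < lam) (hlam1 : lam < 1) (hξ : 0 < ξ)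
    (hcond : 1 / 2 + ξ ≤ (1 - lam) * p₀) (hδ0 : 0 < δ) (hδ1 : δ < 1)
    (c : ℕ) (hc : 1 ≤ c)
    (hclb : 2 * Real.log (2 * m / δ) / (p₀ * lam ^ 2) ≤ (c : ℝ))
    (Y : Fin (2 * m) × Fin c → Ω → Bool) (hmeas : ∀ p, Measurable (Y p))
    (hindep : iIndepFun Y μ)
    (hp : ∀ (i : Fin (2 * m)) (s : Fin c),
      ENNReal.ofReal p₀ ≤ μ {ω | Y (i, s) ω = saffron m i j₀}) :
    ENNReal.ofReal (1 - δ) ≤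
      μ {ω | ∀ i : Fin (2 * m),
        c < 2 * (Finset.univ.filter
          (fun s : Fin c => Y (i, s) ω = saffron m i j₀)).card} :=
  decode_one_defective_general μ m hm j₀ p₀ lam ξ δ hp₀0 hlam0 hξ hcond hδ0 c hclb Y hmeas hindep hp
end

section
/- Let m ≥ 1 be an integer, N = 2^m, and let M be the SAFFRON matrix. Let d ≥ 1 be an integer with d < N, let 𝒢 be a Boolean matrix with rows indexed by Fin h and columns indexed by Fin N that is (d−1)-disjunct, and let G ⊆ Fin N be a set of defective items with |G| ≤ d. For w ∈ Fin h let v_w = ⋁_{j ∈ G, 𝒢 w j = true} M_j (the noiseless block outcome of block w). Then {j ∈ Fin N : ∃ w ∈ Fin h, v_w = M_j} = G; that is, in the noiseless setting, the set of items decoded from the h blocks is exactly the defective set G. -/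
lemma exists_diff_bit {m : ℕ} {a b : Fin (2 ^ m)} (hab : a ≠ b) :
    ∃ c < m, Nat.testBit (a : ℕ) c ≠ Nat.testBit (b : ℕ) c := by
  by_contra hcon
  push_neg at hcon
  apply hab
  have : (a : ℕ) = (b : ℕ) := by
    apply Nat.eq_of_testBit_eq
    intro c
    by_cases hc : c < m
    · exact hcon c hc
    · rw [Nat.testBit_eq_false_of_lt (lt_of_lt_of_le a.2 (Nat.pow_le_pow_right (by norm_num) (le_of_not_gt hc))),
        Nat.testBit_eq_false_of_lt (lt_of_lt_of_le b.2 (Nat.pow_le_pow_right (by norm_num) (le_of_not_gt hc)))]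
  exact Fin.ext this

/-- With a `(d−1)`-disjunct gating matrix `𝒢` (rows `Fin h`, columns
`Fin (2^m)`) and a defective set `G` of at most `d` items, the noiseless block outcomes
`v_w = ⋁_{j ∈ G, 𝒢 w j = true} (saffron column j)` decode exactly `G`: an item `j` is
output (i.e. `v_w` equals the SAFFRON column of `j` for some block `w`) iff `j ∈ G`. -/
theorem noiseless_blocks_decode_defectives (m : ℕ) (hm : 1 ≤ m) {d h : ℕ}
    (hd : 1 ≤ d) (hdN : d < 2 ^ m)
    (𝒢 : Fin h → Fin (2 ^ m) → Bool) (h𝒢 : Disjunct 𝒢 (d - 1))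
    (G : Finset (Fin (2 ^ m))) (hG : G.card ≤ d) :
    ∀ j : Fin (2 ^ m),
      (∃ w : Fin h, ∀ i : Fin (2 * m),
          ((∃ j' ∈ G, 𝒢 w j' = true ∧ saffron m i j' = true) ↔ saffron m i j = true))
        ↔ j ∈ G := by
  intro j
  constructor
  · rintro ⟨w, hw⟩
    by_contra hjG
    by_cases hA : ∃ j₁ ∈ G, 𝒢 w j₁ = true
    · obtain ⟨j₁, hj₁G, hj₁w⟩ := hA
      have hne : j₁ ≠ j := fun e => hjG (e ▸ hj₁G)
      obtain ⟨c, hcm, hbit⟩ := exists_diff_bit hne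
      by_cases hb : Nat.testBit (j₁ : ℕ) c = true
      · -- use row c
        have hclt : c < 2 * m := by omega
        have := (hw ⟨c, hclt⟩).mp ⟨j₁, hj₁G, hj₁w, by simp [saffron, hcm, hb]⟩
        simp only [saffron, hcm, if_pos] at this
        exact hbit (by rw [hb, this])
      · -- testBit j₁ c = false; use row m + c
        have hclt : m + c < 2 * m := by omega
        have hrow : ¬ (m + c < m) := by omega
        have hsub : m + c - m = c := by omega
        have := (hw ⟨m + c, hclt⟩).mp ⟨j₁, hj₁G, hj₁w, by
          simp [saffron, hrow, hsub, Bool.not_eq_true] at *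
          simpa [hsub] using hb⟩
        simp only [saffron, hrow, if_neg, hsub] at this
        have hjc : Nat.testBit (j : ℕ) c = false := by
          cases hh : Nat.testBit (j : ℕ) c
          · rfl
          · rw [hh] at this; simp at this
        exact hbit (by rw [hjc]; simpa using hb)
    · -- no active defectives: v_w all false, but column j is not all false
      push_neg at hA
      have hLfalse : ∀ i : Fin (2 * m), saffron m i j = false := by
        intro i
        cases hs : saffron m i j
        · rfl
        · obtain ⟨j', hj'G, hj'w, _⟩ := (hw i).mpr hs
          have := hA j' hj'G
          simp [hj'w] at this
      have h0 : (0 : ℕ) < 2 * m := by omega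
      have hmlt : m < 2 * m := by omega
      have h1 := hLfalse ⟨0, h0⟩
      have h2 := hLfalse ⟨m, hmlt⟩
      simp only [saffron, Fin.val_mk] at h1 h2
      rw [if_pos (show (0:ℕ) < m by omega)] at h1
      rw [if_neg (lt_irrefl m), Nat.sub_self] at h2
      simp only [Bool.not_eq_false'] at h2
      simp [h1] at h2
  · intro hjG
    -- pad G \ {j} to a set S of size d - 1 avoiding j
    have hsub : G \ {j} ⊆ Finset.univ \ {j} := Finset.sdiff_subset_sdiff (Finset.subset_univ G) (le_refl _)
    have hcard1 : (G \ {j}).card ≤ d - 1 := by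
      have : (G \ {j}).card = G.card - 1 := by
        rw [Finset.card_sdiff_of_subset (by simpa using hjG)]
        simp
      omega
    have hcard2 : d - 1 ≤ (Finset.univ \ {j} : Finset (Fin (2 ^ m))).card := by
      rw [Finset.card_sdiff_of_subset (Finset.subset_univ _)]
      simp [Fintype.card_fin]
      omega
    obtain ⟨S, hSsub, hSsub2, hScard⟩ := Finset.exists_subsuperset_card_eq hsub hcard1 hcard2
    have hjS : j ∉ S := by
      intro hc
      have := hSsub2 hc
      simp at this
    obtain ⟨w, hwj, hwS⟩ := h𝒢 j S hScard hjS
    refine ⟨w, fun i => ⟨?_, fun hs => ⟨j, hjG, hwj, hs⟩⟩⟩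
    rintro ⟨j', hj'G, hj'w, hj's⟩
    have : j' = j := by
      by_contra hne
      have : j' ∈ G \ {j} := Finset.mem_sdiff.mpr ⟨hj'G, by simpa using hne⟩
      have := hwS j' (hSsub this)
      rw [this] at hj'w
      exact Bool.false_ne_true hj'w
    rwa [this] at hj's
end

section
/- (Theorem 2.) Let m ≥ 1 be an integer, N = 2^m, and let M be the SAFFRON matrix. Let d ≥ 1 be an integer with d < N, let 𝒢 be a Boolean matrix with rows indexed by Fin h (h ≥ 1) and columns indexed by Fin N that is (d−1)-disjunct, and let G ⊆ Fin N with |G| ≤ d. For w ∈ Fin h and i ∈ Fin (2m), let b w i be the i-th entry of ⋁_{j ∈ G, 𝒢 w j = true} M_j (the noiseless block outcomes). Let p₀ ∈ (0, 1], λ ∈ (0, 1), ξ > 0 with 1/2 + ξ ≤ (1 − λ)·p₀, and δ ∈ (0, 1). Let c ≥ 1 be an integer with c ≥ 2·ln(2·h·m/δ)/(p₀·λ²), and let Y : (Fin h × Fin (2m) × Fin c) → Ω → Bool be a mutually independent family of Boolean random variables on a probability space (Ω, μ) with μ({ω : Y (w, i, s) ω = b w i}) ≥ p₀ for all w, i,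 s. For ω ∈ Ω define the majority-decoded block vectors v_w(ω) : Fin (2m) → Bool by v_w(ω) i = true iff 2·|{s : Y (w, i, s) ω = true}| > c. Then μ({ω : {j ∈ Fin N : ∃ w ∈ Fin h, v_w(ω) = M_j} = G}) ≥ 1 − δ; that is, with probability at least 1 − δ the decoding procedure outputs exactly the defective set G. -/
open MeasureTheory ProbabilityTheory

/-! If every majority vote returns its noiseless value, decoding is exact. The noiseless
outcome of test `w` is the OR of the SAFFRON columns of the defectives gated into `w`. No SAFFRON
column is covered by another one, since rows `k` and `m + k` carry complementary bits, so this OR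
is a column `M_j` exactly when `j` is the only defective in the test; and `(d - 1)`-disjunctness
of `𝒢` isolates every defective in some test.

By Hoeffding's inequality each of the `2hm` majority votes errs with probability at most
`exp (-2c (p₀ - 1/2)²)`. Since `p₀ - 1/2 ≥ λ p₀` and `p₀ > 1/4`, this is at most
`exp (-c p₀ λ² / 2) ≤ δ / (2hm)`, and a union bound over the votes finishes the proof. -/

open Finset

lemma saffron_of_lt {m k : ℕ} (hk : k < m) (j : Fin (2 ^ m)) :
    saffron m ⟨k, by omega⟩ j = Nat.testBit j k := by
  simp [saffron, hk]

lemma saffron_add_of_lt {m k : ℕ} (hk : k < m) (j : Fin (2 ^ m)) :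
    saffron m ⟨m + k, by omega⟩ j = !Nat.testBit j k := by
  simp [saffron]

lemma saffron_eq_of_le {m : ℕ} {j j' : Fin (2 ^ m)}
    (h : ∀ i, saffron m i j' = true → saffron m i j = true) : j' = j := by
  refine Fin.ext (Nat.eq_of_testBit_eq fun k => ?_)
  rcases lt_or_ge k m with hk | hk
  · have hlo := h ⟨k, by omega⟩
    have hhi := h ⟨m + k, by omega⟩
    rw [saffron_of_lt hk, saffron_of_lt hk] at hlo
    rw [saffron_add_of_lt hk, saffron_add_of_lt hk] at hhi
    revert hlo hhi
    cases Nat.testBit j' k <;> cases Nat.testBit j k <;> simp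
  · rw [Nat.testBit_lt_two_pow (j'.isLt.trans_le (Nat.pow_le_pow_right two_pos hk)),
      Nat.testBit_lt_two_pow (j.isLt.trans_le (Nat.pow_le_pow_right two_pos hk))]

lemma exists_saffron_eq_true {m : ℕ} (hm : 1 ≤ m) (j : Fin (2 ^ m)) :
    ∃ i, saffron m i j = true := by
  cases h : Nat.testBit j 0
  · exact ⟨⟨m + 0, by omega⟩, by rw [saffron_add_of_lt hm, h]; rfl⟩
  · exact ⟨⟨0, by omega⟩, by rw [saffron_of_lt hm, h]⟩

lemma Disjunct.exists_isolating_row {ρ κ : Type*} [Fintype κ] [DecidableEq κ]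
    {T : ρ → κ → Bool} {d : ℕ} (hT : Disjunct T d) (hdκ : d < Fintype.card κ)
    {G : Finset κ} (hG : #G ≤ d + 1) {j : κ} (hj : j ∈ G) :
    ∃ i, T i j = true ∧ ∀ j' ∈ G, j' ≠ j → T i j' = false := by
  obtain ⟨S, hGS, hSj, hS⟩ :=
    exists_subsuperset_card_eq (erase_subset_erase j (subset_univ G))
    (by rw [card_erase_of_mem hj]; omega)
    (by rw [card_erase_of_mem (mem_univ j), card_univ]; omega : d ≤ #(univ.erase j))
  obtain ⟨i, hij, hiS⟩ := hT j S hS fun h => by simpa using hSj h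
  exact ⟨i, hij, fun j' hj' hne => hiS j' (hGS (mem_erase.2 ⟨hne, hj'⟩))⟩

def blockOutcome {m h : ℕ} (𝒢 : Fin h → Fin (2 ^ m) → Bool) (G : Finset (Fin (2 ^ m)))
    (w : Fin h) (i : Fin (2 * m)) : Bool :=
  decide (∃ j ∈ G, 𝒢 w j = true ∧ saffron m i j = true)

lemma exists_blockOutcome_eq_saffron_iff {m h d : ℕ} (hm : 1 ≤ m) (hdN : d < 2 ^ m)
    {𝒢 : Fin h → Fin (2 ^ m) → Bool} (h𝒢 : Disjunct 𝒢 (d - 1))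
    {G : Finset (Fin (2 ^ m))} (hG : #G ≤ d) (j : Fin (2 ^ m)) :
    (∃ w, blockOutcome 𝒢 G w = fun i => saffron m i j) ↔ j ∈ G := by
  constructor
  · rintro ⟨w, hw⟩
    obtain ⟨i, hi⟩ := exists_saffron_eq_true hm j
    obtain ⟨j', hj'G, hw', -⟩ := of_decide_eq_true ((congrFun hw i).trans hi)
    have : j' = j := saffron_eq_of_le fun i' hi' =>
      (congrFun hw i').symm.trans (decide_eq_true ⟨j', hj'G, hw', hi'⟩)
    exact this ▸ hj'G
  · intro hj
    obtain ⟨w, hwj, hw⟩ :=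
      h𝒢.exists_isolating_row (by rw [Fintype.card_fin]; omega) (by omega) hj
    refine ⟨w, funext fun i => ?_⟩
    by_cases hi : saffron m i j = true
    · simpa [blockOutcome, hi] using ⟨j, hj, hwj, hi⟩
    · simp only [blockOutcome, hi, decide_eq_false_iff_not, not_exists, not_and]
      intro j' hj' hwj'
      rcases eq_or_ne j' j with rfl | hne
      · simpa using hi
      · simp [hw j' hj' hne] at hwj'

def majority {ι : Type*} [Fintype ι] (v : ι → Bool) : Bool :=
  decide (Fintype.card ι < 2 * #{s | v s = true})

lemma card_le_two_mul_card_ne_of_majority_ne {ι : Type*} [Fintype ι] {v : ι → Bool}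
    {b : Bool} (h : majority v ≠ b) : Fintype.card ι ≤ 2 * #{s | v s ≠ b} := by
  have hsplit := card_filter_add_card_filter_not (s := univ) (fun s => v s = true)
  rw [card_univ] at hsplit
  cases b <;> simp_all [majority] <;> omega

section Probability

variable {Ω : Type*} [MeasurableSpace Ω] {μ : Measure Ω}

lemma ProbabilityTheory.iIndepFun.indicator_ne {ι : Type*} {Z : ι → Ω → Bool}
    (hindep : iIndepFun Z μ) (b : Bool) :
    iIndepFun (fun s => {ω | Z s ω ≠ b}.indicator (1 : Ω → ℝ)) μ := by
  convert hindep.comp (fun _ t => if t = b then (0 : ℝ) else 1)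
    fun _ => measurable_of_countable _ using 1
  funext s ω
  by_cases h : Z s ω = b <;> simp [h]

lemma measure_iUnion_le_card_mul {ι : Type*} [Fintype ι] {E : ι → Set Ω} {ε : ℝ}
    (hE : ∀ q, μ (E q) ≤ ENNReal.ofReal ε) :
    μ (⋃ q, E q) ≤ ENNReal.ofReal (Fintype.card ι * ε) :=
  calc μ (⋃ q, E q) ≤ ∑ q, μ (E q) := measure_iUnion_fintype_le μ E
    _ ≤ ∑ _q : ι, ENNReal.ofReal ε := sum_le_sum fun q _ => hE q
    _ = ENNReal.ofReal (Fintype.card ι * ε) := by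
      rw [sum_const, nsmul_eq_mul, card_univ, ENNReal.ofReal_mul (by positivity),
        ENNReal.ofReal_natCast]

variable [IsProbabilityMeasure μ]

lemma integral_indicator_ne_le {X : Ω → Bool} (hX : Measurable X) {b : Bool} {p : ℝ}
    (hp : ENNReal.ofReal p ≤ μ {ω | X ω = b}) :
    μ[{ω | X ω ≠ b}.indicator 1] ≤ 1 - p := by
  have hs : MeasurableSet {ω | X ω = b} := hX (measurableSet_singleton b)
  rw [show {ω | X ω ≠ b} = {ω | X ω = b}ᶜ from rfl, integral_indicator_one hs.compl,
    measureReal_compl hs, probReal_univ, measureReal_def]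
  linarith [(ENNReal.ofReal_le_iff_le_toReal (measure_ne_top μ _)).1 hp]

theorem measure_majority_ne_le {ι : Type*} [Fintype ι] {Z : ι → Ω → Bool}
    (hZ : ∀ s, Measurable (Z s)) (hindep : iIndepFun Z μ) {b : Bool} {p : ℝ} (hp : 1 / 2 ≤ p)
    (hZp : ∀ s, ENNReal.ofReal p ≤ μ {ω | Z s ω = b}) :
    μ {ω | majority (fun s => Z s ω) ≠ b}
      ≤ ENNReal.ofReal (Real.exp (-2 * Fintype.card ι * (p - 1 / 2) ^ 2)) := by
  set n : ℝ := (Fintype.card ι : ℝ) with hn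
  set D : ι → Ω → ℝ := fun s => {ω | Z s ω ≠ b}.indicator 1
  have hsubG : ∀ s ∈ (univ : Finset ι),
      HasSubgaussianMGF (fun ω => D s ω - μ[D s]) ((‖(1 : ℝ) - 0‖₊ / 2) ^ 2) μ := by
    intro s _
    refine hasSubgaussianMGF_of_mem_Icc
      (measurable_one.indicator ((hZ s) (measurableSet_singleton b)).compl).aemeasurable
      (ae_of_all _ fun ω => ?_)
    by_cases h : Z s ω = b <;> simp [D, h]
  have hhoeffding := HasSubgaussianMGF.measure_sum_ge_le_of_iIndepFun
    ((hindep.indicator_ne b).comp (fun s (t : ℝ) => t - ∫ ω, D s ω ∂μ)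
      fun _ => measurable_id.sub_const _)
    hsubG (ε := n * (p - 1 / 2)) (by positivity)
  have hsub : {ω | majority (fun s => Z s ω) ≠ b}
      ⊆ {ω | n * (p - 1 / 2) ≤ ∑ s, (D s ω - μ[D s])} := by
    intro ω hω
    have hcount : n ≤ 2 * ∑ s, D s ω := by
      simp only [D, Set.indicator_apply, Set.mem_ofPred_eq, Pi.one_apply, sum_boole, n]
      exact_mod_cast card_le_two_mul_card_ne_of_majority_ne hω
    have hmean : ∑ s, μ[D s] ≤ n * (1 - p) := by
      simpa [← hn, mul_one_sub] using
        sum_le_sum fun s (_ : s ∈ univ) => integral_indicator_ne_le (hZ s) (hZp s)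
    simp only [Set.mem_ofPred_eq, sum_sub_distrib]
    linarith
  calc μ {ω | majority (fun s => Z s ω) ≠ b}
      ≤ μ {ω | n * (p - 1 / 2) ≤ ∑ s, (D s ω - μ[D s])} := measure_mono hsub
    _ = ENNReal.ofReal (μ.real {ω | n * (p - 1 / 2) ≤ ∑ s, (D s ω - μ[D s])}) :=
      (ofReal_measureReal (measure_ne_top μ _)).symm
    _ ≤ _ := by
      gcongr
      refine hhoeffding.trans_eq (congrArg _ ?_)
      rcases eq_or_ne n 0 with hn0 | hn0
      · simp [hn0]
      · simp [← hn]
        field_simp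

lemma ofReal_one_sub_le_measure_of_compl_subset {A B : Set Ω} {δ : ℝ} (hδ : 0 ≤ δ)
    (hBA : Bᶜ ⊆ A) (hB : μ B ≤ ENNReal.ofReal δ) : ENNReal.ofReal (1 - δ) ≤ μ A := by
  have : 1 ≤ μ A + ENNReal.ofReal δ :=
    calc 1 = μ (A ∪ Aᶜ) := by rw [Set.union_compl_self, measure_univ]
      _ ≤ μ A + μ Aᶜ := measure_union_le A Aᶜ
      _ ≤ μ A + ENNReal.ofReal δ := by
        gcongr
        exact (measure_mono (Set.compl_subset_comm.1 hBA)).trans hB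
  rw [ENNReal.ofReal_sub 1 hδ, ENNReal.ofReal_one]
  exact tsub_le_iff_right.2 this

end Probability

lemma nat_mul_exp_neg_le {n : ℕ} {x δ : ℝ} (hδ : 0 < δ) (hx : Real.log (n / δ) ≤ x) :
    n * Real.exp (-x) ≤ δ := by
  rcases Nat.eq_zero_or_pos n with rfl | hn
  · simpa using hδ.le
  calc (n : ℝ) * Real.exp (-x) ≤ n * Real.exp (-Real.log (n / δ)) := by gcongr
    _ = δ := by rw [Real.exp_neg, Real.exp_log (by positivity)]; field_simp

theorem decode_d_defectives_general {Ω : Type*} [MeasurableSpace Ω] (μ : Measure Ω)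
    [IsProbabilityMeasure μ] (m : ℕ) (hm : 1 ≤ m) {d h : ℕ}
    (hdN : d < 2 ^ m)
    (𝒢 : Fin h → Fin (2 ^ m) → Bool) (h𝒢 : Disjunct 𝒢 (d - 1))
    (G : Finset (Fin (2 ^ m))) (hG : G.card ≤ d)
    (p₀ lam ξ δ : ℝ) (hp₀0 : 0 < p₀)
    (hlam0 : 0 < lam) (hξ : 0 < ξ)
    (hcond : 1 / 2 + ξ ≤ (1 - lam) * p₀) (hδ0 : 0 < δ)
    (c : ℕ)
    (hclb : 2 * Real.log (2 * h * m / δ) / (p₀ * lam ^ 2) ≤ (c : ℝ))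
    (Y : Fin h × Fin (2 * m) × Fin c → Ω → Bool) (hmeas : ∀ p, Measurable (Y p))
    (hindep : iIndepFun Y μ)
    (hp : ∀ (w : Fin h) (i : Fin (2 * m)) (s : Fin c),
      ENNReal.ofReal p₀ ≤
        μ {ω | Y (w, i, s) ω
            = decide (∃ j ∈ G, 𝒢 w j = true ∧ saffron m i j = true)}) :
    ENNReal.ofReal (1 - δ) ≤
      μ {ω | ∀ j : Fin (2 ^ m),
        (∃ w : Fin h,
          (fun i : Fin (2 * m) =>
              decide (c < 2 * (Finset.univ.filter
                (fun s : Fin c => Y (w, i, s) ω = true)).card))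
            = fun i : Fin (2 * m) => saffron m i j) ↔ j ∈ G} := by
  set E : Fin h × Fin (2 * m) → Set Ω :=
    fun q => {ω | majority (fun s => Y (q.1, q.2, s) ω) ≠ blockOutcome 𝒢 G q.1 q.2}
  have hmargin : lam * p₀ ≤ p₀ - 1 / 2 := by linarith
  have hhalf : 1 / 2 ≤ p₀ := by nlinarith
  have hvote : ∀ q, μ (E q) ≤ ENNReal.ofReal (Real.exp (-(2 * c * (p₀ - 1 / 2) ^ 2))) := by
    rintro ⟨w, i⟩
    simpa using measure_majority_ne_le (b := blockOutcome 𝒢 G w i) (fun s => hmeas _)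
      (hindep.precomp ((Prod.mk_right_injective w).comp (Prod.mk_right_injective i)))
      hhalf (hp w i)
  have hlog : Real.log (2 * h * m / δ) ≤ 2 * c * (p₀ - 1 / 2) ^ 2 := by
    have hrate : p₀ * lam ^ 2 ≤ 4 * (p₀ - 1 / 2) ^ 2 := by nlinarith [mul_pos hlam0 hp₀0]
    rw [div_le_iff₀ (by positivity)] at hclb
    nlinarith [(Nat.cast_nonneg c : (0 : ℝ) ≤ c)]
  have hunion : μ (⋃ q, E q) ≤ ENNReal.ofReal δ := by
    refine (measure_iUnion_le_card_mul hvote).trans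
      (ENNReal.ofReal_le_ofReal (nat_mul_exp_neg_le hδ0 ?_))
    convert hlog using 3
    simp only [Fintype.card_prod, Fintype.card_fin]
    push_cast
    ring
  refine ofReal_one_sub_le_measure_of_compl_subset hδ0.le (fun ω hω j => ?_) hunion
  simp only [Set.mem_compl_iff, Set.mem_iUnion, not_exists, E] at hω
  have hdecoded : ∀ w, (fun i : Fin (2 * m) =>
      decide (c < 2 * (univ.filter (fun s : Fin c => Y (w, i, s) ω = true)).card))
        = blockOutcome 𝒢 G w :=
    fun w => funext fun i => by simpa [majority] using hω (w, i)
  simp only [hdecoded]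
  exact exists_blockOutcome_eq_saffron_iff hm hdN h𝒢 hG j

/-- Theorem 2: With a `(d−1)`-disjunct gating matrix `𝒢`, a defective
set `G` with `|G| ≤ d`, noiseless block outcomes `b w i`, and mutually independent
noisy observations `Y (w, i, s)` each agreeing with `b w i` with probability at least
`p₀`, where `1/2 + ξ ≤ (1 − lam) p₀` and `c ≥ 2 ln(2hm/δ)/(p₀ lam²)`, coordinatewise
strict-majority voting followed by SAFFRON column matching outputs exactly the
defective set `G` with probability at least `1 − δ`. -/
theorem decode_d_defectives {Ω : Type*} [MeasurableSpace Ω] (μ : Measure Ω)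
    [IsProbabilityMeasure μ] (m : ℕ) (hm : 1 ≤ m) {d h : ℕ}
    (hd : 1 ≤ d) (hdN : d < 2 ^ m) (hh : 1 ≤ h)
    (𝒢 : Fin h → Fin (2 ^ m) → Bool) (h𝒢 : Disjunct 𝒢 (d - 1))
    (G : Finset (Fin (2 ^ m))) (hG : G.card ≤ d)
    (p₀ lam ξ δ : ℝ) (hp₀0 : 0 < p₀) (hp₀1 : p₀ ≤ 1)
    (hlam0 : 0 < lam) (hlam1 : lam < 1) (hξ : 0 < ξ)
    (hcond : 1 / 2 + ξ ≤ (1 - lam) * p₀) (hδ0 : 0 < δ) (hδ1 : δ < 1)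
    (c : ℕ) (hc : 1 ≤ c)
    (hclb : 2 * Real.log (2 * h * m / δ) / (p₀ * lam ^ 2) ≤ (c : ℝ))
    (Y : Fin h × Fin (2 * m) × Fin c → Ω → Bool) (hmeas : ∀ p, Measurable (Y p))
    (hindep : iIndepFun Y μ)
    (hp : ∀ (w : Fin h) (i : Fin (2 * m)) (s : Fin c),
      ENNReal.ofReal p₀ ≤
        μ {ω | Y (w, i, s) ω
            = decide (∃ j ∈ G, 𝒢 w j = true ∧ saffron m i j = true)}) :
    ENNReal.ofReal (1 - δ) ≤
      μ {ω | ∀ j : Fin (2 ^ m),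
        (∃ w : Fin h,
          (fun i : Fin (2 * m) =>
              decide (c < 2 * (Finset.univ.filter
                (fun s : Fin c => Y (w, i, s) ω = true)).card))
            = fun i : Fin (2 * m) => saffron m i j) ↔ j ∈ G} :=
  decode_d_defectives_general μ m hm hdN 𝒢 h𝒢 G hG p₀ lam ξ δ hp₀0 hlam0 hξ hcond hδ0 c hclb Y hmeas
    hindep hp
end
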